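/- arXiv:0801.4320 — 2 statements merged into one kernel-verified Lean document; each statement's English description precedes it below -/
import Mathlib

section
/- Let E be a regular (a,b)-module and E^b its biggest simple-pole sub-(a,b)-module. Then the smallest integer m such that bᵐ·E ⊆ E^b equals δ(E), the smallest integer with E^♯ ⊆ b^{−m}·E. -/
set_option synthInstance.maxHeartbeats 1000000
set_option maxHeartbeats 1000000

open PowerSeries

noncomputable section

/-- `ℂ[[b]]`. -/
abbrev Rb := PowerSeries ℂ

variable {E : Type} [AddCommGroup E] [Module Rb E]
  [Module ℂ E] [IsScalarTower ℂ Rb E]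

/-- Multiplication by `bⁿ`, i.e. the submodule `bⁿ·G` of a `ℂ[[b]]`-module. -/
def bpow (n : ℕ) (G : Submodule Rb E) : Submodule Rb E :=
  (Ideal.span {(X : Rb) ^ n}) • G

/-- The operator `b` (multiplication by `X`) as a `ℂ`-linear endomorphism. -/
def bop : E →ₗ[ℂ] E := (LinearMap.lsmul Rb E (X : Rb)).restrictScalars ℂ

/-- An (a,b)-module structure: `E` is a free finite-rank `ℂ[[b]]`-module
and `a` is a `ℂ`-linear, `b`-adically continuous endomorphism with
`a·b − b·a = b²`; equivalently, `a(S·x) = S·a(x) + b²·S'(b)·x` for all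
`S ∈ ℂ[[b]]`. -/
def IsABMod (a : E →ₗ[ℂ] E) : Prop :=
  ∀ (S : Rb) (x : E), a (S • x) = S • a x + ((X : Rb) ^ 2 * derivative ℂ S) • x

/-- The operators `Tⱼ = bʲ·(b⁻¹a)ʲ`, defined recursively by `T₀ = id`,
`T_{j+1} = (a − j·b)∘Tⱼ`. -/
def Tj (a : E →ₗ[ℂ] E) : ℕ → (E →ₗ[ℂ] E)
  | 0 => LinearMap.id
  | (j + 1) => (a - (j : ℂ) • bop) ∘ₗ Tj a j

/-- The `ℂ`-subspace `Σ_{j=0}^{k} aʲ·b^{k−j+1}·E`. -/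
def Psi (a : E →ₗ[ℂ] E) (k : ℕ) : Submodule ℂ E :=
  ⨆ j ∈ Finset.range (k + 1),
    Submodule.map (a ^ j) ((bpow (k - j + 1) ⊤).restrictScalars ℂ)

/-- The regularity condition `a^{k+1}·E ⊆ Σ_{j=0}^{k} aʲ·b^{k−j+1}·E`. -/
def RegCond (a : E →ₗ[ℂ] E) (k : ℕ) : Prop :=
  ∀ x : E, (a ^ (k + 1)) x ∈ Psi a k

/-- `E` is regular (equivalently: some regularity condition holds). -/
def IsRegularAB (a : E →ₗ[ℂ] E) : Prop := ∃ k, RegCond a k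

/-- The regularity order `or(E)`. -/
def regOrder (a : E →ₗ[ℂ] E) : ℕ := sInf {k | RegCond a k}

/-- `b^k·E^♯ = b^k·Φ_k(E) = Σ_{j=0}^{k} b^{k−j}·Tⱼ(E)`: the saturation
`E^♯ = Σ_j (b⁻¹a)ʲ·E` of `E`, renormalized by `b^k` so as to live inside `E`. -/
def Wsat (a : E →ₗ[ℂ] E) (k : ℕ) : Submodule Rb E :=
  Submodule.span Rb
    (⋃ j ∈ Finset.range (k + 1), Set.range fun x : E => ((X : Rb) ^ (k - j)) • (Tj a j x))

/-- A submodule `G ⊆ E` is a simple-pole submodule when `a·G ⊆ b·G`. -/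
def SimplePoleSub (a : E →ₗ[ℂ] E) (G : Submodule Rb E) : Prop :=
  ∀ x ∈ G, a x ∈ bpow 1 G

/-- The index `δ(E)`: the smallest `m` with `E^♯ ⊆ b^{−m}·E`,
i.e. `bᵐ·E^♯ ⊆ E`, i.e. `bᵐ·(b^k·E^♯) ⊆ b^k·E` for `k = or(E)`. -/
def deltaIdx (a : E →ₗ[ℂ] E) : ℕ :=
  sInf {m | bpow m (Wsat a (regOrder a)) ≤ bpow (regOrder a) ⊤}

/-- The biggest simple-pole submodule `E^b` of `E`. -/
def Eb (a : E →ₗ[ℂ] E) : Submodule Rb E := sSup {G | SimplePoleSub a G}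

set_option linter.unusedSectionVars false

/-! Let `k = or(E)` and `W = b^k·E^♯ ⊆ E`. Regularity puts `T_{k+1}(E)` inside `b·W`, which makes
`W` a simple-pole submodule. As `b^δ·W ⊆ b^k·E`, the module `b^δ·E^♯ = b^{δ-k}·W` lies in `E`;
it has a simple pole and contains `b^δ·E`, hence lies in `E^b`. Conversely, if `b^m·E ⊆ E^b`,
the simple pole of `E^b` gives `b^m·T_j(E) ⊆ b^j·E^b` for all `j`, whence `b^m·W ⊆ b^k·E`. -/

theorem mem_bpow {n : ℕ} {G : Submodule Rb E} {x : E} :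
    x ∈ bpow n G ↔ ∃ g ∈ G, (X : Rb) ^ n • g = x := by
  rw [bpow, Submodule.ideal_span_singleton_smul, Submodule.mem_smul_pointwise_iff_exists]

theorem X_pow_smul_mem_bpow {n : ℕ} {G : Submodule Rb E} {g : E} (hg : g ∈ G) :
    (X : Rb) ^ n • g ∈ bpow n G :=
  mem_bpow.2 ⟨g, hg, rfl⟩

theorem X_smul_mem_bpow_one {G : Submodule Rb E} {g : E} (hg : g ∈ G) :
    (X : Rb) • g ∈ bpow 1 G := by
  simpa using X_pow_smul_mem_bpow (n := 1) hg

theorem X_pow_smul_mem_bpow_add {i j : ℕ} {G : Submodule Rb E} {y : E} (hy : y ∈ bpow j G) :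
    (X : Rb) ^ i • y ∈ bpow (i + j) G := by
  obtain ⟨g, hg, rfl⟩ := mem_bpow.1 hy
  rw [smul_smul, ← pow_add]
  exact X_pow_smul_mem_bpow hg

theorem bpow_mono (n : ℕ) {G H : Submodule Rb E} (h : G ≤ H) : bpow n G ≤ bpow n H :=
  Submodule.smul_mono le_rfl h

theorem le_bpow_sub_of_bpow_le [Module.IsTorsionFree Rb E] {m k : ℕ} {G : Submodule Rb E}
    (hmk : m ≤ k) (h : bpow m G ≤ bpow k ⊤) : G ≤ bpow (k - m) ⊤ := by
  intro g hg
  obtain ⟨e, -, he⟩ := mem_bpow.1 (h (X_pow_smul_mem_bpow (n := m) hg))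
  refine mem_bpow.2 ⟨e, trivial, (smul_right_inj (pow_ne_zero m (X_ne_zero : (X : Rb) ≠ 0))).1 ?_⟩
  rw [smul_smul, ← pow_add, Nat.add_sub_cancel' hmk, he]

theorem bpow_le_comap_of_bpow_le {m k : ℕ} {W : Submodule Rb E}
    (hmk : m ≤ k) (h : bpow k ⊤ ≤ W) :
    bpow m ⊤ ≤ W.comap (LinearMap.lsmul Rb E ((X : Rb) ^ (k - m))) := by
  intro x hx
  obtain ⟨g, -, rfl⟩ := mem_bpow.1 hx
  rw [Submodule.mem_comap, LinearMap.lsmul_apply, smul_smul, ← pow_add, Nat.sub_add_cancel hmk]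
  exact h (X_pow_smul_mem_bpow trivial)

theorem Tj_succ_apply (a : E →ₗ[ℂ] E) (j : ℕ) (x : E) :
    Tj a (j + 1) x = a (Tj a j x) - (j : ℂ) • ((X : Rb) • Tj a j x) := by
  simp [Tj, bop]

theorem map_Tj (a : E →ₗ[ℂ] E) (j : ℕ) (x : E) :
    a (Tj a j x) = Tj a (j + 1) x + (j : ℂ) • ((X : Rb) • Tj a j x) := by
  rw [Tj_succ_apply, sub_add_cancel]

section Wsat

variable {a : E →ₗ[ℂ] E}

theorem Wsat_le {k : ℕ} {V : Submodule Rb E}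
    (h : ∀ j ≤ k, ∀ x, (X : Rb) ^ (k - j) • Tj a j x ∈ V) : Wsat a k ≤ V := by
  refine Submodule.span_le.2 ?_
  intro y hy
  obtain ⟨j, hj, x, rfl⟩ := Set.mem_iUnion₂.1 hy
  exact h j (Nat.lt_succ_iff.1 (Finset.mem_range.1 hj)) x

theorem X_pow_smul_Tj_mem_Wsat {k j : ℕ} (hj : j ≤ k) (x : E) :
    (X : Rb) ^ (k - j) • Tj a j x ∈ Wsat a k :=
  Submodule.subset_span (Set.mem_iUnion₂.2 ⟨j, Finset.mem_range.2 (by omega), x, rfl⟩)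

theorem Tj_mem_Wsat (k : ℕ) (x : E) : Tj a k x ∈ Wsat a k := by
  simpa using X_pow_smul_Tj_mem_Wsat (le_refl k) x

theorem bpow_top_le_Wsat (k : ℕ) : bpow k ⊤ ≤ Wsat a k := by
  intro x hx
  obtain ⟨g, -, rfl⟩ := mem_bpow.1 hx
  simpa [Tj] using X_pow_smul_Tj_mem_Wsat (a := a) (Nat.zero_le k) g

theorem X_smul_mem_Wsat_succ {l : ℕ} {u : E} (hu : u ∈ Wsat a l) :
    (X : Rb) • u ∈ Wsat a (l + 1) := by
  refine Wsat_le (V := (Wsat a (l + 1)).comap (LinearMap.lsmul Rb E X)) (fun j hj x => ?_) hu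
  rw [Submodule.mem_comap, LinearMap.lsmul_apply, smul_smul, ← pow_succ',
    show l - j + 1 = l + 1 - j by omega]
  exact X_pow_smul_Tj_mem_Wsat (by omega) x

theorem Wsat_succ_le_bpow_one {l : ℕ} (h : ∀ x, Tj a (l + 1) x ∈ bpow 1 (Wsat a l)) :
    Wsat a (l + 1) ≤ bpow 1 (Wsat a l) := by
  refine Wsat_le fun j hj x => ?_
  rcases hj.lt_or_eq with hj | rfl
  · rw [show l + 1 - j = l - j + 1 by omega, pow_succ', mul_smul]
    exact X_smul_mem_bpow_one (X_pow_smul_Tj_mem_Wsat (by omega) x)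
  · simpa using h x

end Wsat

theorem SimplePoleSub.le_Eb {a : E →ₗ[ℂ] E} {G : Submodule Rb E} (hG : SimplePoleSub a G) :
    G ≤ Eb a :=
  le_sSup hG

namespace IsABMod

variable {a : E →ₗ[ℂ] E}

theorem map_X_smul (ha : IsABMod a) (x : E) :
    a ((X : Rb) • x) = (X : Rb) • (a x + (X : Rb) • x) := by
  rw [ha, smul_add, derivative_X, mul_one, pow_two, mul_smul]

theorem map_X_pow_smul (ha : IsABMod a) (n : ℕ) (x : E) :
    a ((X : Rb) ^ n • x) = (X : Rb) ^ n • a x + (n : ℂ) • ((X : Rb) ^ (n + 1) • x) := by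
  induction n generalizing x with
  | zero => simp
  | succ n ih =>
    rw [pow_succ, mul_smul, ih, ha.map_X_smul]
    simp only [smul_add, smul_smul, ← mul_assoc, ← pow_succ, Nat.cast_succ, add_smul, one_smul]
    abel

theorem map_smul_mem (ha : IsABMod a) {V : Submodule Rb E} {u : E}
    (hau : a u ∈ V) (hXu : (X : Rb) • u ∈ V) (S : Rb) : a (S • u) ∈ V := by
  rw [ha, pow_two, mul_assoc, mul_comm, mul_smul]
  exact add_mem (V.smul_mem S hau) (V.smul_mem _ hXu)

theorem map_mem_of_mem_span (ha : IsABMod a) {s : Set E} {V : Submodule Rb E}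
    (hs : ∀ x ∈ s, a x ∈ V) (hX : ∀ u ∈ Submodule.span Rb s, (X : Rb) • u ∈ V)
    {u : E} (hu : u ∈ Submodule.span Rb s) : a u ∈ V := by
  induction hu using Submodule.span_induction with
  | mem x hx => exact hs x hx
  | zero => simp
  | add u v _ _ hu hv => simpa using add_mem hu hv
  | smul S u hu' hu => exact ha.map_smul_mem hu (hX u hu') S

theorem map_mem_bpow_one (ha : IsABMod a) {U V : Submodule Rb E}
    (haU : ∀ u ∈ U, a u ∈ V) (hXU : ∀ u ∈ U, (X : Rb) • u ∈ V) {y : E} (hy : y ∈ bpow 1 U) :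
    a y ∈ bpow 1 V := by
  obtain ⟨u, hu, rfl⟩ := mem_bpow.1 hy
  rw [pow_one, ha.map_X_smul]
  exact X_smul_mem_bpow_one (add_mem (haU u hu) (hXU u hu))

theorem map_mem_Wsat_succ (ha : IsABMod a) {l : ℕ} {u : E} (hu : u ∈ Wsat a l) :
    a u ∈ Wsat a (l + 1) := by
  refine ha.map_mem_of_mem_span ?_ (fun u hu => X_smul_mem_Wsat_succ hu) hu
  intro y hy
  obtain ⟨j, hj, x, rfl⟩ := Set.mem_iUnion₂.1 hy
  have hjl := Nat.lt_succ_iff.1 (Finset.mem_range.1 hj)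
  have hXT : (X : Rb) ^ (l - j) • (X : Rb) • Tj a j x ∈ Wsat a (l + 1) := by
    rw [smul_comm]
    exact X_smul_mem_Wsat_succ (X_pow_smul_Tj_mem_Wsat hjl x)
  rw [ha.map_X_pow_smul, map_Tj, smul_add, smul_comm _ (j : ℂ), pow_succ', mul_smul]
  refine add_mem (add_mem ?_ (Submodule.smul_of_tower_mem _ _ hXT))
    (Submodule.smul_of_tower_mem _ _ (by rwa [smul_comm]))
  simpa using X_pow_smul_Tj_mem_Wsat (k := l + 1) (Nat.succ_le_succ hjl) x

theorem pow_map_mem_bpow_one_Wsat (ha : IsABMod a) (j : ℕ) {l : ℕ} {y : E}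
    (hy : y ∈ bpow 1 (Wsat a l)) : (a ^ j) y ∈ bpow 1 (Wsat a (l + j)) := by
  induction j with
  | zero => simpa using hy
  | succ j ih =>
    rw [pow_succ', Module.End.mul_apply]
    exact ha.map_mem_bpow_one (fun _ => ha.map_mem_Wsat_succ) (fun _ => X_smul_mem_Wsat_succ) ih

theorem pow_succ_sub_Tj_mem (ha : IsABMod a) (j : ℕ) (x : E) :
    (a ^ (j + 1)) x - Tj a (j + 1) x ∈ bpow 1 (Wsat a j) := by
  induction j with
  | zero => simp [Tj]
  | succ j ih =>
    have h : (a ^ (j + 2)) x - Tj a (j + 2) x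
        = a ((a ^ (j + 1)) x - Tj a (j + 1) x) + ((j + 1 : ℕ) : ℂ) • ((X : Rb) • Tj a (j + 1) x) := by
      rw [map_sub, map_Tj, pow_succ' a, Module.End.mul_apply]
      abel
    rw [h]
    refine add_mem ?_ (Submodule.smul_of_tower_mem _ _ (X_smul_mem_bpow_one (Tj_mem_Wsat _ x)))
    exact ha.map_mem_bpow_one (fun _ => ha.map_mem_Wsat_succ) (fun _ => X_smul_mem_Wsat_succ) ih

theorem Psi_le (ha : IsABMod a) (k : ℕ) : Psi a k ≤ (bpow 1 (Wsat a k)).restrictScalars ℂ := by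
  refine iSup₂_le fun j hj => ?_
  rintro _ ⟨y, hy, rfl⟩
  obtain ⟨g, -, rfl⟩ := mem_bpow.1 hy
  have hg : (X : Rb) ^ (k - j + 1) • g ∈ bpow 1 (Wsat a (k - j)) := by
    rw [pow_succ', mul_smul]
    exact X_smul_mem_bpow_one (bpow_top_le_Wsat _ (X_pow_smul_mem_bpow trivial))
  have := ha.pow_map_mem_bpow_one_Wsat j hg
  rwa [Nat.sub_add_cancel (Nat.lt_succ_iff.1 (Finset.mem_range.1 hj))] at this

theorem simplePoleSub_Wsat (ha : IsABMod a) {k : ℕ} (hk : RegCond a k) :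
    SimplePoleSub a (Wsat a k) := by
  have hT : ∀ x, Tj a (k + 1) x ∈ bpow 1 (Wsat a k) := fun x => by
    rw [← sub_sub_cancel ((a ^ (k + 1)) x) (Tj a (k + 1) x)]
    exact sub_mem (ha.Psi_le k (hk x)) (ha.pow_succ_sub_Tj_mem k x)
  exact fun u hu => Wsat_succ_le_bpow_one hT (ha.map_mem_Wsat_succ hu)

theorem simplePoleSub_Eb (ha : IsABMod a) : SimplePoleSub a (Eb a) := by
  intro u hu
  rw [Eb, ← Submodule.span_biUnion] at hu
  refine ha.map_mem_of_mem_span (fun x hx => ?_) (fun v hv => ?_) hu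
  · obtain ⟨G, hG, hxG⟩ := Set.mem_iUnion₂.1 hx
    exact bpow_mono 1 hG.le_Eb (hG x hxG)
  · rw [Submodule.span_biUnion] at hv
    exact X_smul_mem_bpow_one hv

theorem simplePoleSub_comap_X_pow [Module.IsTorsionFree Rb E] (ha : IsABMod a)
    {W : Submodule Rb E} {n : ℕ} (hW : SimplePoleSub a W) (hWn : W ≤ bpow n ⊤) :
    SimplePoleSub a (W.comap (LinearMap.lsmul Rb E ((X : Rb) ^ n))) := by
  intro x hx
  rw [Submodule.mem_comap, LinearMap.lsmul_apply] at hx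
  have hax : (X : Rb) ^ n • a x ∈ bpow 1 W := by
    rw [eq_sub_of_add_eq (ha.map_X_pow_smul n x).symm, pow_succ', mul_smul]
    exact sub_mem (hW _ hx) (Submodule.smul_of_tower_mem _ _ (X_smul_mem_bpow_one hx))
  obtain ⟨w, hw, hwx⟩ := mem_bpow.1 hax
  obtain ⟨e, -, rfl⟩ := mem_bpow.1 (hWn hw)
  refine mem_bpow.2 ⟨e, hw, (smul_right_inj (pow_ne_zero n (X_ne_zero : (X : Rb) ≠ 0))).1 ?_⟩
  rw [← hwx, smul_comm]

theorem map_mem_bpow_succ (ha : IsABMod a) {G : Submodule Rb E} (hG : SimplePoleSub a G)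
    {j : ℕ} {y : E} (hy : y ∈ bpow j G) : a y ∈ bpow (j + 1) G := by
  obtain ⟨g, hg, rfl⟩ := mem_bpow.1 hy
  obtain ⟨g', hg', hag⟩ := mem_bpow.1 (hG g hg)
  rw [ha.map_X_pow_smul, ← hag, smul_smul, ← pow_add]
  exact add_mem (X_pow_smul_mem_bpow hg')
    (Submodule.smul_of_tower_mem _ _ (X_pow_smul_mem_bpow hg))

theorem X_pow_smul_Tj_succ (ha : IsABMod a) (m j : ℕ) (x : E) :
    (X : Rb) ^ m • Tj a (j + 1) x = a ((X : Rb) ^ m • Tj a j x)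
      - ((m + j : ℕ) : ℂ) • ((X : Rb) • (X : Rb) ^ m • Tj a j x) := by
  rw [Tj_succ_apply, ha.map_X_pow_smul, smul_sub, Nat.cast_add, add_smul, smul_comm _ (j : ℂ),
    smul_comm _ (X : Rb), smul_smul (X : Rb), ← pow_succ']
  abel

theorem X_pow_smul_Tj_mem_bpow (ha : IsABMod a) {G : Submodule Rb E} (hG : SimplePoleSub a G)
    {m : ℕ} (hm : bpow m ⊤ ≤ G) (j : ℕ) (x : E) : (X : Rb) ^ m • Tj a j x ∈ bpow j G := by
  induction j with
  | zero => simpa [Tj, bpow] using hm (X_pow_smul_mem_bpow trivial)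
  | succ j ih =>
    rw [ha.X_pow_smul_Tj_succ]
    refine sub_mem (ha.map_mem_bpow_succ hG ih) (Submodule.smul_of_tower_mem _ _ ?_)
    simpa [add_comm] using X_pow_smul_mem_bpow_add (i := 1) ih

theorem bpow_Wsat_le (ha : IsABMod a) {G : Submodule Rb E} (hG : SimplePoleSub a G)
    {m : ℕ} (hm : bpow m ⊤ ≤ G) (k : ℕ) : bpow m (Wsat a k) ≤ bpow k G := by
  intro y hy
  obtain ⟨w, hw, rfl⟩ := mem_bpow.1 hy
  refine Wsat_le (V := (bpow k G).comap (LinearMap.lsmul Rb E ((X : Rb) ^ m)))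
    (fun j hj x => ?_) hw
  rw [Submodule.mem_comap, LinearMap.lsmul_apply, smul_comm]
  have := X_pow_smul_mem_bpow_add (i := k - j) (ha.X_pow_smul_Tj_mem_bpow hG hm j x)
  rwa [Nat.sub_add_cancel hj] at this

end IsABMod

theorem stmt_8_general [Module.Free Rb E]
    (a : E →ₗ[ℂ] E) (ha : IsABMod a) (hreg : IsRegularAB a) :
    sInf {m : ℕ | bpow m ⊤ ≤ Eb a} = deltaIdx a := by
  set k := regOrder a
  have hW : SimplePoleSub a (Wsat a k) := ha.simplePoleSub_Wsat (Nat.sInf_mem hreg)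
  have hk_mem : bpow k (Wsat a k) ≤ bpow k ⊤ := bpow_mono k le_top
  have hδ : deltaIdx a ∈ {m | bpow m (Wsat a k) ≤ bpow k ⊤} := Nat.sInf_mem ⟨k, hk_mem⟩
  have hδk : deltaIdx a ≤ k := Nat.sInf_le hk_mem
  -- `(Wsat a k).comap (b^(k-δ))` is `b^δ·E^♯`
  have hδEb : bpow (deltaIdx a) ⊤ ≤ Eb a :=
    (bpow_le_comap_of_bpow_le hδk (bpow_top_le_Wsat k)).trans
      (ha.simplePoleSub_comap_X_pow hW (le_bpow_sub_of_bpow_le hδk hδ)).le_Eb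
  have hm := Nat.sInf_mem (⟨_, hδEb⟩ : {m : ℕ | bpow m ⊤ ≤ Eb a}.Nonempty)
  refine le_antisymm (Nat.sInf_le hδEb) (Nat.sInf_le ?_)
  exact (ha.bpow_Wsat_le ha.simplePoleSub_Eb hm k).trans (bpow_mono k le_top)

/-- Let `E` be a regular (a,b)-module and `E^b` its biggest simple-pole
sub-(a,b)-module.  The smallest integer `m` such that `bᵐ·E ⊆ E^b` equals
`δ(E)`, the smallest integer with `E^♯ ⊆ b^{−m}·E`. -/
theorem stmt_8 [Module.Free Rb E] [Module.Finite Rb E]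
    (a : E →ₗ[ℂ] E) (ha : IsABMod a) (hreg : IsRegularAB a) :
    sInf {m : ℕ | bpow m ⊤ ≤ Eb a} = deltaIdx a :=
  stmt_8_general a ha hreg

end
end

section
/- Let V_λ := Ã/(Ã·(a−λ) + Ã·b) for λ ∈ ℂ. Then the sequence 0 → Ã →^α Ã² →^β Ã → V_λ → 0, with α(x) := (x·b, −x·(a−b−λ)) and β(u,v) := u·(a−λ) + v·b, is an exact (free) resolution of V_λ by left Ã-modules. -/
set_option synthInstance.maxHeartbeats 1000000
set_option maxHeartbeats 1000000

open PowerSeries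

noncomputable section

/-- `ℂ[[z]]`, on which the algebra `Ã` acts faithfully. -/
abbrev PS := PowerSeries ℂ

/-- The operator `a := multiplication by z` on `ℂ[[z]]`. -/
def opA : Module.End ℂ PS where
  toFun f := X * f
  map_add' := by intro f g; ring
  map_smul' := by intro c f; simp [mul_smul_comm]

/-- The operator `b := ∫₀ᶻ` (primitive without constant term) on `ℂ[[z]]`.
One has `a∘b - b∘a = b∘b`, so these operators realize the commutation relation
`a·b - b·a = b²` of `Ã`. -/
def opB : Module.End ℂ PS where
  toFun f := PowerSeries.mk fun n => if n = 0 then 0 else coeff (n - 1) f / (n : ℂ)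
  map_add' := by
    intro f g; ext n; by_cases h : n = 0 <;> simp [h, add_div]
  map_smul' := by
    intro c f; ext n; by_cases h : n = 0 <;> simp [h, mul_div_assoc]

/-- The algebra `Ã = { Σ_{ν ≥ 0} P_ν(a)·bᵛ }` (with `P_ν ∈ ℂ[z]`, commutation
relation `a·b − b·a = b²`), realized concretely as the set of endomorphisms of
`ℂ[[z]]` given by a (formal, `b`-adically convergent) series `Σ_ν P_ν(a)·bᵛ`
with polynomial coefficients `P_ν`.  Since `bᵛ` raises the `z`-order by `ν`,
the coefficient of `zⁿ` of `T f` only involves the terms with `ν ≤ n`. -/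
def Atilde : Set (Module.End ℂ PS) :=
  {T | ∃ P : ℕ → Polynomial ℂ, ∀ (f : PS) (n : ℕ),
    coeff n (T f) =
      ∑ ν ∈ Finset.range (n + 1),
        coeff n ((Polynomial.aeval opA (P ν)) ((opB ^ ν) f))}

/-!
Every `T ∈ Ã` is a series `Σ_ν P_ν(a)·bᵛ`, and since `bᵛ zᵏ = k!/(k+ν)! · z^(k+ν)`, the
coefficient of `z^(k+s)` in `T zᵏ` tends to the coefficient of `zˢ` in `P₀` as `k → ∞`. Moreover
`T = P₀(a) + x·b` with `x ∈ Ã`, so `T ∈ Ã·b` as soon as `P₀` vanishes.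

If `T·b = 0`, then `T` kills `zᵏ` for `k ≥ 1`, hence `P₀ = 0` and `T = x·b` with `x·b² = 0`;
iterating, `T ∈ Ã·bⁿ` for every `n`. As every element of `Ã` preserves the `z`-adic order,
`T f` has order `≥ n` for all `n`, i.e. `T = 0`: right multiplication by `b` is injective.

If `u·(a-λ) + v·b = 0`, write `u = P₀(a) + x·b`; the relation `b·(a-λ) = (a-b-λ)·b` turns it into
`(P₀·(z-λ))(a) + w·b = 0` with `w ∈ Ã`, so `P₀·(z-λ) = 0` and `u ∈ Ã·b`. Exactness of the
resolution is then formal.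
-/

open Filter
open scoped Nat Topology

lemma coeff_opB (f : PS) (n : ℕ) :
    coeff n (opB f) = if n = 0 then 0 else coeff (n - 1) f / (n : ℂ) := by
  simp [opB]

lemma opA_apply (f : PS) : opA f = X * f := rfl

lemma aeval_opA_apply (Q : Polynomial ℂ) (f : PS) :
    Polynomial.aeval opA Q f = (Q : PS) * f := by
  have hA : opA = Algebra.lmul ℂ PS X := rfl
  rw [hA, Polynomial.aeval_algHom_apply, Algebra.coe_lmul_eq_mul, LinearMap.mul_apply',
    ← Polynomial.eval₂_C_X_eq_coe]
  rfl

lemma opB_X_pow (m : ℕ) : opB ((X : PS) ^ m) = ((m + 1 : ℂ))⁻¹ • (X : PS) ^ (m + 1) := by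
  ext n
  rw [coeff_opB]
  rcases n with _ | n
  · simp
  · by_cases h : n = m
    · subst h; simp [div_eq_inv_mul]
    · simp [coeff_X_pow, h]

lemma opB_pow_X_pow (ν k : ℕ) :
    (opB ^ ν) ((X : PS) ^ k) = ((k ! : ℂ) / ((k + ν)! : ℂ)) • (X : PS) ^ (k + ν) := by
  induction ν generalizing k with
  | zero => simp [div_self (Nat.cast_ne_zero.mpr (Nat.factorial_ne_zero k) : (k ! : ℂ) ≠ 0)]
  | succ ν ih =>
    rw [pow_succ', Module.End.mul_apply, ih, map_smul, opB_X_pow, smul_smul, ← add_assoc]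
    congr 1
    have h1 : ((k + ν)! : ℂ) ≠ 0 := Nat.cast_ne_zero.mpr (Nat.factorial_ne_zero _)
    have h2 : ((k + ν : ℕ) : ℂ) + 1 ≠ 0 := Nat.cast_add_one_ne_zero _
    rw [Nat.factorial_succ]
    push_cast
    field_simp

lemma coeff_opB_pow_of_lt (ν : ℕ) (f : PS) {m : ℕ} (h : m < ν) :
    coeff m ((opB ^ ν) f) = 0 := by
  induction ν generalizing m with
  | zero => omega
  | succ ν ih =>
    rw [pow_succ', Module.End.mul_apply, coeff_opB]
    rcases m with _ | m
    · simp
    · rw [if_neg m.succ_ne_zero, Nat.add_sub_cancel, ih (by omega), zero_div]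

lemma coeff_aeval_opA_opB_pow_of_lt (Q : Polynomial ℂ) (f : PS) {m ν : ℕ} (h : m < ν) :
    coeff m (Polynomial.aeval opA Q ((opB ^ ν) f)) = 0 := by
  have hdvd : X ^ ν ∣ (opB ^ ν) f :=
    X_pow_dvd_iff.mpr fun d hd => coeff_opB_pow_of_lt ν f hd
  rw [aeval_opA_apply]
  exact X_pow_dvd_iff.mp (hdvd.mul_left _) m h

lemma opB_mul_opA : opB * opA = opA * opB - opB * opB := by
  ext f n
  simp only [Module.End.mul_apply, LinearMap.sub_apply, map_sub]
  rw [coeff_opB, opA_apply, opA_apply, coeff_opB]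
  rcases n with _ | _ | n
  · simp
  · simp [coeff_opB]
  · simp only [Nat.succ_ne_zero, if_false, Nat.add_sub_cancel, coeff_succ_X_mul, coeff_opB]
    have h1 : ((n : ℂ) + 1) ≠ 0 := Nat.cast_add_one_ne_zero n
    have h2 : ((n : ℂ) + 1 + 1) ≠ 0 := by
      exact_mod_cast Nat.cast_add_one_ne_zero (R := ℂ) (n + 1)
    push_cast
    field_simp
    ring

def seriesOp (P : ℕ → Polynomial ℂ) : Module.End ℂ PS where
  toFun f := PowerSeries.mk fun n =>
    ∑ ν ∈ Finset.range (n + 1), coeff n (Polynomial.aeval opA (P ν) ((opB ^ ν) f))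
  map_add' f g := by ext n; simp [Finset.sum_add_distrib]
  map_smul' c f := by ext n; simp [Finset.mul_sum]

lemma coeff_seriesOp (P : ℕ → Polynomial ℂ) (f : PS) (n : ℕ) :
    coeff n (seriesOp P f) =
      ∑ ν ∈ Finset.range (n + 1), coeff n (Polynomial.aeval opA (P ν) ((opB ^ ν) f)) := by
  simp [seriesOp]

lemma mem_Atilde_iff {T : Module.End ℂ PS} : T ∈ Atilde ↔ ∃ P, seriesOp P = T := by
  refine ⟨fun ⟨P, hP⟩ => ⟨P, ?_⟩, fun ⟨P, hP⟩ => ⟨P, fun f n => ?_⟩⟩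
  · ext f n
    rw [coeff_seriesOp, hP]
  · rw [← hP, coeff_seriesOp]

lemma seriesOp_mem_Atilde (P : ℕ → Polynomial ℂ) : seriesOp P ∈ Atilde :=
  mem_Atilde_iff.mpr ⟨P, rfl⟩

lemma seriesOp_eq_aeval_add_mul_opB (P : ℕ → Polynomial ℂ) :
    seriesOp P = Polynomial.aeval opA (P 0) + seriesOp (fun ν => P (ν + 1)) * opB := by
  ext f n
  have hpow : ∀ ν, (opB ^ ν) (opB f) = (opB ^ (ν + 1)) f := fun ν => by
    rw [pow_succ, Module.End.mul_apply]
  rw [LinearMap.add_apply, Module.End.mul_apply, map_add, coeff_seriesOp, coeff_seriesOp,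
    Finset.sum_range_succ', Finset.sum_range_succ]
  simp only [hpow, coeff_aeval_opA_opB_pow_of_lt _ _ n.lt_succ_self, pow_zero,
    Module.End.one_apply, zero_add, add_comm]

lemma coeff_seriesOp_opB_pow_of_lt (P : ℕ → Polynomial ℂ) (f : PS) {m n : ℕ} (h : m < n) :
    coeff m (seriesOp P ((opB ^ n) f)) = 0 := by
  rw [coeff_seriesOp]
  refine Finset.sum_eq_zero fun ν _ => ?_
  rw [← Module.End.mul_apply (opB ^ ν), ← pow_add]
  exact coeff_aeval_opA_opB_pow_of_lt _ _ (by omega)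

lemma coeff_seriesOp_X_pow (P : ℕ → Polynomial ℂ) (k s : ℕ) :
    coeff (k + s) (seriesOp P ((X : PS) ^ k)) =
      ∑ ν ∈ Finset.range (s + 1), ((k ! : ℂ) / ((k + ν)! : ℂ)) * (P ν).coeff (s - ν) := by
  have hterm : ∀ ν, coeff (k + s) (Polynomial.aeval opA (P ν) ((opB ^ ν) ((X : PS) ^ k))) =
      if ν ≤ s then ((k ! : ℂ) / ((k + ν)! : ℂ)) * (P ν).coeff (s - ν) else 0 := fun ν => by
    rw [opB_pow_X_pow, map_smul, aeval_opA_apply, map_smul, smul_eq_mul, coeff_mul_X_pow',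
      Polynomial.coeff_coe]
    split_ifs with h₁ h₂ h₂
    · rw [show k + s - (k + ν) = s - ν by omega]
    · omega
    · omega
    · rw [mul_zero]
  rw [coeff_seriesOp, Finset.sum_congr rfl fun ν _ => hterm ν, ← Finset.sum_filter]
  congr 1
  ext ν
  simp only [Finset.mem_filter, Finset.mem_range]
  omega

lemma tendsto_factorial_div_factorial_add_succ (ν : ℕ) :
    Tendsto (fun k : ℕ => (k ! : ℂ) / ((k + (ν + 1))! : ℂ)) atTop (𝓝 0) := by
  refine squeeze_zero_norm (fun k => ?_) tendsto_one_div_add_atTop_nhds_zero_nat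
  have hle : (k + 1)! ≤ (k + (ν + 1))! := Nat.factorial_le (by omega)
  rw [Nat.factorial_succ] at hle
  rw [norm_div, Complex.norm_natCast, Complex.norm_natCast,
    div_le_div_iff₀ (by positivity) (by positivity), one_mul]
  exact_mod_cast (by linarith : k ! * (k + 1) ≤ (k + (ν + 1))!)

lemma tendsto_coeff_seriesOp_X_pow (P : ℕ → Polynomial ℂ) (s : ℕ) :
    Tendsto (fun k => coeff (k + s) (seriesOp P ((X : PS) ^ k))) atTop
      (𝓝 ((P 0).coeff s)) := by
  simp_rw [coeff_seriesOp_X_pow, Finset.sum_range_succ', add_zero, Nat.sub_zero]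
  have hfac : ∀ k : ℕ, (k ! : ℂ) / (k ! : ℂ) = 1 := fun k =>
    div_self (Nat.cast_ne_zero.mpr (Nat.factorial_ne_zero k))
  simp_rw [hfac, one_mul]
  have hsum : Tendsto (fun k : ℕ => ∑ ν ∈ Finset.range s,
      (k ! : ℂ) / ((k + (ν + 1))! : ℂ) * (P (ν + 1)).coeff (s - (ν + 1))) atTop (𝓝 0) := by
    simpa using tendsto_finsetSum (Finset.range s) fun ν _ =>
      (tendsto_factorial_div_factorial_add_succ ν).mul_const ((P (ν + 1)).coeff (s - (ν + 1)))
  simpa using hsum.add_const ((P 0).coeff s)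

lemma seriesOp_X_pow_add_eq_zero {P : ℕ → Polynomial ℂ} {m : ℕ} (h : seriesOp P * opB ^ m = 0)
    (k : ℕ) : seriesOp P ((X : PS) ^ (k + m)) = 0 := by
  have hk := congrArg (fun T : Module.End ℂ PS => T ((X : PS) ^ k)) h
  simp only [Module.End.mul_apply, opB_pow_X_pow, map_smul, LinearMap.zero_apply] at hk
  refine (smul_eq_zero.mp hk).resolve_left (div_ne_zero ?_ ?_) <;>
    exact Nat.cast_ne_zero.mpr (Nat.factorial_ne_zero _)

lemma eq_zero_of_seriesOp_mul_opB_pow_eq_zero {P : ℕ → Polynomial ℂ} {m : ℕ}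
    (h : seriesOp P * opB ^ m = 0) : P 0 = 0 := by
  ext s
  refine tendsto_nhds_unique (tendsto_coeff_seriesOp_X_pow P s) (tendsto_const_nhds.congr' ?_)
  filter_upwards [eventually_ge_atTop m] with k hk
  rw [← Nat.sub_add_cancel hk, seriesOp_X_pow_add_eq_zero h, map_zero, Polynomial.coeff_zero]

lemma eq_zero_of_mul_opB_eq_zero {T : Module.End ℂ PS} (hT : T ∈ Atilde) (h : T * opB = 0) :
    T = 0 := by
  have hdesc : ∀ n : ℕ, ∃ P, T = seriesOp P * opB ^ n := by
    intro n
    induction n with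
    | zero =>
      obtain ⟨P, rfl⟩ := mem_Atilde_iff.mp hT
      exact ⟨P, by rw [pow_zero, mul_one]⟩
    | succ n ih =>
      obtain ⟨P, rfl⟩ := ih
      have hP0 : P 0 = 0 := eq_zero_of_seriesOp_mul_opB_pow_eq_zero (m := n + 1) (by
        rw [pow_succ, ← mul_assoc, h])
      refine ⟨fun ν => P (ν + 1), ?_⟩
      rw [seriesOp_eq_aeval_add_mul_opB, hP0, map_zero, zero_add, mul_assoc, ← pow_succ']
  ext f n
  obtain ⟨P, rfl⟩ := hdesc (n + 1)
  exact coeff_seriesOp_opB_pow_of_lt P f n.lt_succ_self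

lemma eq_zero_of_aeval_opA_add_mul_opB_eq_zero {Q : Polynomial ℂ} {w : Module.End ℂ PS}
    (hw : w ∈ Atilde) (h : Polynomial.aeval opA Q + w * opB = 0) : Q = 0 := by
  obtain ⟨R, rfl⟩ := mem_Atilde_iff.mp hw
  let P : ℕ → Polynomial ℂ := fun ν => if ν = 0 then Q else R (ν - 1)
  have hP : seriesOp P * opB ^ 0 = 0 := by
    rw [pow_zero, mul_one, seriesOp_eq_aeval_add_mul_opB]
    simpa [P] using h
  simpa [P] using eq_zero_of_seriesOp_mul_opB_pow_eq_zero hP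

lemma opB_mul_opA_sub_algebraMap (lam : ℂ) :
    opB * (opA - algebraMap ℂ (Module.End ℂ PS) lam) =
      (opA - opB - algebraMap ℂ (Module.End ℂ PS) lam) * opB := by
  rw [mul_sub, opB_mul_opA, sub_mul, sub_mul, Algebra.commutes]

lemma exists_eq_mul_opB_of_mul_add_mul_opB_eq_zero {A : Subalgebra ℂ (Module.End ℂ PS)}
    (hA : (A : Set (Module.End ℂ PS)) = Atilde) (ha : opA ∈ A) (hb : opB ∈ A) {lam : ℂ}
    {u v : Module.End ℂ PS} (hu : u ∈ A) (hv : v ∈ A)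
    (h : u * (opA - algebraMap ℂ (Module.End ℂ PS) lam) + v * opB = 0) :
    ∃ x ∈ A, u = x * opB := by
  have hmem : ∀ T, T ∈ A ↔ T ∈ Atilde := fun T => by rw [← hA, SetLike.mem_coe]
  obtain ⟨P, rfl⟩ := mem_Atilde_iff.mp ((hmem u).mp hu)
  set x := seriesOp fun ν => P (ν + 1)
  have hux : seriesOp P = Polynomial.aeval opA (P 0) + x * opB := seriesOp_eq_aeval_add_mul_opB P
  have hx : x ∈ A := (hmem x).mpr (seriesOp_mem_Atilde _)
  set w := v + x * (opA - opB - algebraMap ℂ (Module.End ℂ PS) lam)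
  have hw : w ∈ A :=
    A.add_mem hv (A.mul_mem hx (A.sub_mem (A.sub_mem ha hb) (A.algebraMap_mem lam)))
  have hrel : Polynomial.aeval opA (P 0 * (Polynomial.X - Polynomial.C lam)) + w * opB = 0 := by
    rw [← h, hux, map_mul, map_sub, Polynomial.aeval_X, Polynomial.aeval_C, add_mul, mul_assoc x,
      ← opB_mul_opA_sub_algebraMap]
    noncomm_ring
  have hP0 : P 0 = 0 := by
    simpa [Polynomial.X_sub_C_ne_zero] using
      eq_zero_of_aeval_opA_add_mul_opB_eq_zero ((hmem w).mp hw) hrel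
  exact ⟨x, hx, by rw [hux, hP0, map_zero, zero_add]⟩

lemma mul_add_mul_eq_zero_iff_of_isRightRegular {R : Type*} [Ring R] {a b c u v : R}
    (hcomm : b * a = c * b) (hb : IsRightRegular b) (hu : u * a + v * b = 0 → ∃ x, u = x * b) :
    u * a + v * b = 0 ↔ ∃ x, u = x * b ∧ v = -(x * c) := by
  constructor
  · intro h
    obtain ⟨x, rfl⟩ := hu h
    refine ⟨x, rfl, hb ?_⟩
    change v * b = -(x * c) * b
    rw [neg_mul, mul_assoc, ← hcomm, ← mul_assoc, eq_neg_iff_add_eq_zero, add_comm, h]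
  · rintro ⟨x, rfl, rfl⟩
    rw [mul_assoc, hcomm, neg_mul, mul_assoc, add_neg_cancel]

/-- Let `V_λ := Ã/(Ã·(a−λ) + Ã·b)`.  The sequence
`0 → Ã →^α Ã² →^β Ã → V_λ → 0`, with `α(x) := (x·b, −x·(a−b−λ))` and
`β(u,v) := u·(a−λ) + v·b`, is an exact (free) resolution of `V_λ` by left
`Ã`-modules: `α` is injective, `ker β = im α`, and the image of `β` is the
left ideal `Ã·(a−λ) + Ã·b`, i.e. the kernel of `Ã → V_λ`.
Here `Ã` is realized as the subalgebra `Asub` of `End_ℂ(ℂ[[z]])` with carrier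
`Atilde`, and `aA`, `bA` are its generators `a`, `b`. -/
theorem stmt_13 (Asub : Subalgebra ℂ (Module.End ℂ PS))
    (hA : (Asub : Set (Module.End ℂ PS)) = Atilde)
    (aA bA : Asub) (haA : (aA : Module.End ℂ PS) = opA)
    (hbA : (bA : Module.End ℂ PS) = opB) (lam : ℂ) :
    Function.Injective (fun x : Asub =>
        ((x * bA, -(x * (aA - bA - algebraMap ℂ Asub lam))) : Asub × Asub)) ∧
    (∀ u v : Asub, u * (aA - algebraMap ℂ Asub lam) + v * bA = 0 ↔
        ∃ x : Asub, u = x * bA ∧ v = -(x * (aA - bA - algebraMap ℂ Asub lam))) ∧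
    (∀ y : Asub,
        y ∈ (Submodule.span Asub {aA - algebraMap ℂ Asub lam} ⊔
              Submodule.span Asub {bA} : Submodule Asub Asub) ↔
        ∃ u v : Asub, y = u * (aA - algebraMap ℂ Asub lam) + v * bA) := by
  have hreg : IsRightRegular bA := isRightRegular_of_non_zero_divisor bA fun x hx =>
    Subtype.ext (eq_zero_of_mul_opB_eq_zero (hA ▸ x.2)
      (by simpa [hbA] using congrArg Subtype.val hx))
  have hcomm : bA * (aA - algebraMap ℂ Asub lam) = (aA - bA - algebraMap ℂ Asub lam) * bA :=
    Subtype.ext (by simpa [haA, hbA] using opB_mul_opA_sub_algebraMap lam)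
  have hfactor (u v : Asub) (h : u * (aA - algebraMap ℂ Asub lam) + v * bA = 0) :
      ∃ x, u = x * bA := by
    obtain ⟨x, hx, hux⟩ := exists_eq_mul_opB_of_mul_add_mul_opB_eq_zero hA (haA ▸ aA.2)
      (hbA ▸ bA.2) u.2 v.2 (by simpa [haA, hbA] using congrArg Subtype.val h)
    exact ⟨⟨x, hx⟩, Subtype.ext (by simp [hux, hbA])⟩
  refine ⟨fun x y hxy => hreg (congrArg Prod.fst hxy), fun u v =>
    mul_add_mul_eq_zero_iff_of_isRightRegular (R := Asub) hcomm hreg (hfactor u v), fun y => ?_⟩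
  rw [← Submodule.span_insert, Submodule.mem_span_pair]
  simp only [smul_eq_mul, eq_comm]

end
end
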